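/- arXiv:1801.03483 — 12 statements merged into one kernel-verified Lean document; each statement's English description precedes it below -/
import Mathlib

section
/- In an abstract represented-problem setup over X, the decision procedure P is rationalizable by choice function — i.e. there exists a linear order on X such that for every a : T, P(a) is the maximum of the nonempty finite set ⟦a⟧ with respect to that order — if and only if P is extensional (EXT) and satisfies α-extended (αE). -/
/-!
A choice function `c` on the nonempty finite subsets of `X` that satisfies Sen's contraction
condition α (if `c A` survives in `B ⊆ A`, then `c B = c A`) is rationalized by its revealed
preference on pairs, `x ≤ y ↔ c {x, y} = y`: contraction to `{x, c A}` gives `x ≤ c A` for every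
`x ∈ A`, which yields transitivity (via the choice from `{x, y, z}`) and `c A = max' A`.
When `P` is extensional and satisfies αE, `c A := P (r A)` is such a choice function and
`P a = c ⟦a⟧`. Conversely, a maximum stays the maximum of every subset containing it.
-/

namespace Finset

theorem max'_eq_max'_of_subset {α : Type*} [LinearOrder α] {s t : Finset α} (hs : s.Nonempty)
    (ht : t.Nonempty) (hst : s ⊆ t) (hmem : t.max' ht ∈ s) : s.max' hs = t.max' ht :=
  le_antisymm (max'_subset hs hst) (le_max' s _ hmem)

end Finset

namespace ChoiceFunction

variable {X : Type*}

theorem congr_finset (c : (A : Finset X) → A.Nonempty → X) {A B : Finset X} (hA : A.Nonempty)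
    (hB : B.Nonempty) (h : A = B) : c A hA = c B hB := by
  subst h
  rfl

variable [DecidableEq X] {c : (A : Finset X) → A.Nonempty → X}

variable (c) in
def RevealedLE (x y : X) : Prop :=
  c {x, y} (Finset.insert_nonempty x {y}) = y

variable (c) in
def SenAlpha : Prop :=
  ∀ A hA B hB, B ⊆ A → c A hA ∈ B → c B hB = c A hA

theorem revealedLE_antisymm {x y : X} (hxy : RevealedLE c x y) (hyx : RevealedLE c y x) :
    x = y :=
  calc x = c {y, x} _ := hyx.symm
    _ = c {x, y} _ := congr_finset c _ _ (Finset.pair_comm y x)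
    _ = y := hxy

theorem revealedLE_refl (hmem : ∀ A hA, c A hA ∈ A) (x : X) : RevealedLE c x x := by
  have h := hmem {x, x} (Finset.insert_nonempty x {x})
  simpa [RevealedLE] using h

theorem revealedLE_total (hmem : ∀ A hA, c A hA ∈ A) (x y : X) :
    RevealedLE c x y ∨ RevealedLE c y x := by
  have h := hmem {x, y} (Finset.insert_nonempty x {y})
  simp only [Finset.mem_insert, Finset.mem_singleton] at h
  rcases h with h | h
  · exact Or.inr ((congr_finset c _ _ (Finset.pair_comm y x)).trans h)
  · exact Or.inl h

theorem revealedLE_choice (hmem : ∀ A hA, c A hA ∈ A) (hα : SenAlpha c) {A : Finset X}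
    (hA : A.Nonempty) {x : X} (hx : x ∈ A) : RevealedLE c x (c A hA) :=
  hα A hA {x, c A hA} _ (Finset.insert_subset hx (Finset.singleton_subset_iff.mpr (hmem A hA)))
    (Finset.mem_insert_of_mem (Finset.mem_singleton_self _))

theorem revealedLE_trans (hmem : ∀ A hA, c A hA ∈ A) (hα : SenAlpha c) {x y z : X}
    (hxy : RevealedLE c x y) (hyz : RevealedLE c y z) : RevealedLE c x z := by
  have hxyz : ({x, y, z} : Finset X).Nonempty := Finset.insert_nonempty _ _
  have dominates : ∀ w ∈ ({x, y, z} : Finset X), RevealedLE c w (c _ hxyz) :=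
    fun w hw => revealedLE_choice hmem hα hxyz hw
  have hm := hmem _ hxyz
  simp only [Finset.mem_insert, Finset.mem_singleton] at hm
  rcases hm with hm | hm | hm
  · have hyx : x = y := revealedLE_antisymm hxy (hm ▸ dominates y (by simp))
    exact hyx ▸ hyz
  · have hzy : y = z := revealedLE_antisymm hyz (hm ▸ dominates z (by simp))
    exact hzy ▸ hxy
  · exact hm ▸ dominates x (by simp)

noncomputable abbrev revealedOrder (hmem : ∀ A hA, c A hA ∈ A) (hα : SenAlpha c) :
    LinearOrder X where
  le := RevealedLE c
  le_refl := revealedLE_refl hmem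
  le_trans _ _ _ := revealedLE_trans hmem hα
  le_antisymm _ _ := revealedLE_antisymm
  le_total := revealedLE_total hmem
  toDecidableLE := Classical.decRel _

theorem eq_max'_revealedOrder (hmem : ∀ A hA, c A hA ∈ A) (hα : SenAlpha c) {A : Finset X}
    (hA : A.Nonempty) : c A hA = @Finset.max' X (revealedOrder hmem hα) A hA :=
  letI := revealedOrder hmem hα
  le_antisymm (Finset.le_max' A _ (hmem A hA))
    (revealedLE_choice hmem hα hA (Finset.max'_mem A hA))

end ChoiceFunction

/-- In an abstract represented-problem setup over `X`, the decision
procedure `P` is rationalizable by choice function (there is a linear order on `X`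
such that `P a` is always the maximum of `⟦a⟧`) iff `P` is extensional and
satisfies α-extended. -/
theorem stmt_1 {X T : Type*} (ext : T → Finset X)
    (hne : ∀ a : T, (ext a).Nonempty)
    (P : T → X) (hP : ∀ a : T, P a ∈ ext a)
    (r : (A : Finset X) → A.Nonempty → T)
    (hr : ∀ (A : Finset X) (hA : A.Nonempty), ext (r A hA) = A) :
    (∃ L : LinearOrder X, ∀ a : T, P a = @Finset.max' X L (ext a) (hne a)) ↔
      ((∀ a b : T, ext a = ext b → P a = P b) ∧
        (∀ (a : T) (B : Finset X), B.Nonempty → P a ∈ B → B ⊆ ext a →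
          ∃ b : T, ext b = B ∧ P b = P a)) := by
  classical
  constructor
  · rintro ⟨L, hL⟩
    refine ⟨fun a b hab => by simp only [hL, hab], fun a B hB hPB hBa => ⟨r B hB, hr B hB, ?_⟩⟩
    rw [hL a] at hPB
    rw [hL, hL a]
    convert Finset.max'_eq_max'_of_subset hB (hne a) hBa hPB using 2
    exact hr B hB
  · rintro ⟨hEXT, hαE⟩
    have hmem : ∀ A hA, P (r A hA) ∈ A := fun A hA => by simpa only [hr] using hP (r A hA)
    have hα : ChoiceFunction.SenAlpha fun A hA => P (r A hA) := by
      intro A hA B hB hBA hcB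
      obtain ⟨b, hbB, hPb⟩ := hαE (r A hA) B hB hcB (by rwa [hr])
      exact (hEXT _ _ (by rw [hr, hbB])).trans hPb
    refine ⟨ChoiceFunction.revealedOrder hmem hα, fun a => ?_⟩
    rw [← ChoiceFunction.eq_max'_revealedOrder hmem hα]
    exact hEXT _ _ (hr _ _).symm
end

section
/- In an abstract represented-problem setup over X, the choice correspondence C_P of the decision procedure P is rationalizable — i.e. there exists a complete and transitive relation ⪰ on X (for all x, y, x ⪰ y or y ⪰ x, and ⪰ is transitive) such that for every nonempty finite A : Finset X, C_P(A) = {x ∈ A : ∀ y ∈ A, x ⪰ y} — if and only if P satisfies both γ⁺-extended (γ⁺E) and α-extended (αE). -/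
/-!
If `R` rationalizes `C_P`, then `P a` is an `R`-maximum of `⟦a⟧`, which gives αE directly and γ⁺E
by transitivity through `P b`. Conversely, let `x ⪰ y` mean that some problem with extension
`{x, y}` is decided as `x`. The representation makes `⪰` complete, γ⁺E followed by αE makes it
transitive, αE shows that every choice is a `⪰`-maximum, and γ⁺E builds a problem choosing a
`⪰`-maximum `x` of `A` by adjoining the pairs `{x, y}`, `y ∈ A`, one at a time.
-/

namespace RepresentedProblem

variable {X T : Type*} (ext : T → Finset X) (P : T → X)

def AlphaExtended : Prop :=
  ∀ (a : T) (B : Finset X), B.Nonempty → P a ∈ B → B ⊆ ext a → ∃ b : T, ext b = B ∧ P b = P a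

def Rationalizes (R : X → X → Prop) : Prop :=
  ∀ A : Finset X, A.Nonempty →
    {x : X | ∃ a : T, ext a = A ∧ P a = x} = {x : X | x ∈ A ∧ ∀ y ∈ A, R x y}

section DecidableEq

variable [DecidableEq X]

def GammaPlusExtended : Prop :=
  ∀ a b : T, P b ∈ ext a → ∃ d : T, ext d = ext a ∪ ext b ∧ P d = P a

def RevealedPref (x y : X) : Prop :=
  ∃ c : T, ext c = {x, y} ∧ P c = x

end DecidableEq

variable {ext P} {R : X → X → Prop}

theorem Rationalizes.rel_apply_of_mem (hP : ∀ a : T, P a ∈ ext a) (hR : Rationalizes ext P R)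
    (a : T) {y : X} (hy : y ∈ ext a) : R (P a) y := by
  have hmem : P a ∈ {x : X | ∃ b, ext b = ext a ∧ P b = x} := ⟨a, rfl, rfl⟩
  rw [hR _ ⟨P a, hP a⟩] at hmem
  exact hmem.2 y hy

theorem Rationalizes.exists_of_forall_rel (hR : Rationalizes ext P R) {A : Finset X} {x : X}
    (hx : x ∈ A) (hxA : ∀ y ∈ A, R x y) : ∃ a : T, ext a = A ∧ P a = x := by
  have hmem : x ∈ {x : X | x ∈ A ∧ ∀ y ∈ A, R x y} := ⟨hx, hxA⟩
  rwa [← hR _ ⟨x, hx⟩] at hmem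

theorem Rationalizes.alphaExtended (hP : ∀ a : T, P a ∈ ext a) (hR : Rationalizes ext P R) :
    AlphaExtended ext P :=
  fun a _ _ haB hB => hR.exists_of_forall_rel haB fun _ hy => hR.rel_apply_of_mem hP a (hB hy)

variable [DecidableEq X]

theorem Rationalizes.gammaPlusExtended (hP : ∀ a : T, P a ∈ ext a) (hR : Rationalizes ext P R)
    (htrans : Transitive R) : GammaPlusExtended ext P := by
  intro a b hb
  refine hR.exists_of_forall_rel (Finset.mem_union_left _ (hP a)) fun y hy => ?_
  rcases Finset.mem_union.1 hy with hy | hy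
  · exact hR.rel_apply_of_mem hP a hy
  · exact htrans (hR.rel_apply_of_mem hP a hb) (hR.rel_apply_of_mem hP b hy)

theorem revealedPref_total (hP : ∀ a : T, P a ∈ ext a) (r : (A : Finset X) → A.Nonempty → T)
    (hr : ∀ (A : Finset X) (hA : A.Nonempty), ext (r A hA) = A) (x y : X) :
    RevealedPref ext P x y ∨ RevealedPref ext P y x := by
  have hxy : ({x, y} : Finset X).Nonempty := Finset.insert_nonempty _ _
  have hmem := hP (r _ hxy)
  rw [hr _ hxy, Finset.mem_insert, Finset.mem_singleton] at hmem
  rcases hmem with h | h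
  · exact Or.inl ⟨r _ hxy, hr _ hxy, h⟩
  · exact Or.inr ⟨r _ hxy, by rw [hr _ hxy, Finset.pair_comm], h⟩

theorem revealedPref_transitive (hγ : GammaPlusExtended ext P) (hα : AlphaExtended ext P) :
    Transitive (RevealedPref ext P) := by
  rintro x y z ⟨a, ha, rfl⟩ ⟨b, hb, hby⟩
  obtain ⟨d, hd, hda⟩ := hγ a b (by simp [ha, hby])
  have hxz : ({P a, z} : Finset X) ⊆ ext d := by
    rw [hd, ha, hb]
    intro w
    simp only [Finset.mem_union, Finset.mem_insert, Finset.mem_singleton]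
    tauto
  obtain ⟨c, hc, hca⟩ := hα d _ (Finset.insert_nonempty _ _) (by simp [hda]) hxz
  exact ⟨c, hc, hca.trans hda⟩

theorem revealedPref_of_mem (hP : ∀ a : T, P a ∈ ext a) (hα : AlphaExtended ext P) (a : T)
    {y : X} (hy : y ∈ ext a) : RevealedPref ext P (P a) y := by
  have hsub : ({P a, y} : Finset X) ⊆ ext a := Finset.insert_subset (hP a) (by simpa using hy)
  obtain ⟨b, hb, hba⟩ := hα a _ (Finset.insert_nonempty _ _) (Finset.mem_insert_self _ _) hsub
  exact ⟨b, hb, hba⟩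

theorem exists_ext_eq_insert_of_revealedPref (hγ : GammaPlusExtended ext P) {x : X}
    (hxx : RevealedPref ext P x x) (s : Finset X) (hs : ∀ y ∈ s, RevealedPref ext P x y) :
    ∃ a : T, ext a = insert x s ∧ P a = x := by
  induction s using Finset.induction_on with
  | empty =>
    obtain ⟨c, hc, hcx⟩ := hxx
    exact ⟨c, by simpa using hc, hcx⟩
  | insert y s _ ih =>
    obtain ⟨a, ha, hax⟩ := ih fun z hz => hs z (Finset.mem_insert_of_mem hz)
    obtain ⟨c, hc, hcx⟩ := hs y (Finset.mem_insert_self _ _)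
    obtain ⟨d, hd, hda⟩ := hγ a c (by simp [ha, hcx])
    refine ⟨d, ?_, hda.trans hax⟩
    rw [hd, ha, hc]
    ext w
    simp only [Finset.mem_union, Finset.mem_insert, Finset.mem_singleton]
    tauto

theorem revealedPref_rationalizes (hP : ∀ a : T, P a ∈ ext a) (hγ : GammaPlusExtended ext P)
    (hα : AlphaExtended ext P) : Rationalizes ext P (RevealedPref ext P) := by
  intro A _
  ext x
  constructor
  · rintro ⟨a, rfl, rfl⟩
    exact ⟨hP a, fun y hy => revealedPref_of_mem hP hα a hy⟩
  · rintro ⟨hx, hxA⟩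
    simpa [Finset.insert_eq_of_mem hx] using
      exists_ext_eq_insert_of_revealedPref hγ (hxA x hx) A hxA

end RepresentedProblem

open RepresentedProblem in
theorem stmt_2_general {X T : Type*} [DecidableEq X] (ext : T → Finset X)
    (P : T → X) (hP : ∀ a : T, P a ∈ ext a)
    (r : (A : Finset X) → A.Nonempty → T)
    (hr : ∀ (A : Finset X) (hA : A.Nonempty), ext (r A hA) = A) :
    (∃ R : X → X → Prop, (∀ x y : X, R x y ∨ R y x) ∧ Transitive R ∧
        ∀ A : Finset X, A.Nonempty →
          {x : X | ∃ a : T, ext a = A ∧ P a = x} = {x : X | x ∈ A ∧ ∀ y ∈ A, R x y}) ↔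
      ((∀ a b : T, P b ∈ ext a → ∃ d : T, ext d = ext a ∪ ext b ∧ P d = P a) ∧
        (∀ (a : T) (B : Finset X), B.Nonempty → P a ∈ B → B ⊆ ext a →
          ∃ b : T, ext b = B ∧ P b = P a)) := by
  constructor
  · rintro ⟨R, -, htrans, hR⟩
    exact ⟨Rationalizes.gammaPlusExtended hP hR htrans, Rationalizes.alphaExtended hP hR⟩
  · rintro ⟨hγ, hα⟩
    exact ⟨RevealedPref ext P, revealedPref_total hP r hr, revealedPref_transitive hγ hα,
      revealedPref_rationalizes hP hγ hα⟩

/-- In an abstract represented-problem setup over `X`, the choice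
correspondence `C_P` of the decision procedure `P` is rationalizable by a complete
and transitive relation iff `P` satisfies γ⁺-extended and α-extended. -/
theorem stmt_2 {X T : Type*} [DecidableEq X] (ext : T → Finset X)
    (hne : ∀ a : T, (ext a).Nonempty)
    (P : T → X) (hP : ∀ a : T, P a ∈ ext a)
    (r : (A : Finset X) → A.Nonempty → T)
    (hr : ∀ (A : Finset X) (hA : A.Nonempty), ext (r A hA) = A) :
    (∃ R : X → X → Prop, (∀ x y : X, R x y ∨ R y x) ∧ Transitive R ∧
        ∀ A : Finset X, A.Nonempty →
          {x : X | ∃ a : T, ext a = A ∧ P a = x} = {x : X | x ∈ A ∧ ∀ y ∈ A, R x y}) ↔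
      ((∀ a b : T, P b ∈ ext a → ∃ d : T, ext d = ext a ∪ ext b ∧ P d = P a) ∧
        (∀ (a : T) (B : Finset X), B.Nonempty → P a ∈ B → B ⊆ ext a →
          ∃ b : T, ext b = B ∧ P b = P a)) :=
  stmt_2_general ext P hP r hr
end

section
/- Let P be a decision procedure on List2 X that is both extensional (EXT) and strongly inductive (SIND). Then P is rationalizable by choice function, i.e. there exists a linear order on X such that for every a : List2 X, P(a) is the maximum of the nonempty finite set ⟦a⟧ with respect to that order. -/
/-- The algebraic datatype `List2 X` of nonempty lists built from singletons and
concatenation. -/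
inductive List2 (X : Type) : Type where
  | Sing2 : X → List2 X
  | Cat : List2 X → List2 X → List2 X

variable {X : Type} [DecidableEq X]

/-- The extension of a represented decision problem: the set of alternatives it
contains. -/
def List2.ext : List2 X → Finset X
  | .Sing2 x => {x}
  | .Cat a b => a.ext ∪ b.ext

theorem List2.ext_nonempty : ∀ a : List2 X, a.ext.Nonempty
  | .Sing2 x => ⟨x, by simp [List2.ext]⟩
  | .Cat a b => (List2.ext_nonempty a).mono (by simp [List2.ext, Finset.subset_union_left])

/-! `P (Cat a b)` depends only on `P a` and `P b` (strong inductivity), namely through the binary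
choice `c x y = P (Cat (Sing2 x) (Sing2 y))`. Since `⟦·⟧` forgets order and bracketing,
extensionality makes `c` commutative and associative, and a selective commutative associative
operation is the maximum of the linear order `x ≤ y ↔ c x y = y`. Induction on `a` then
identifies `P a` with the maximum of `⟦a⟧`. -/

-- `max` is `f` itself, not the `if`-expression it would default to.
noncomputable abbrev LinearOrder.ofSelective {α : Type*} (f : α → α → α)
    (comm : ∀ x y, f x y = f y x) (assoc : ∀ x y z, f (f x y) z = f x (f y z))
    (sel : ∀ x y, f x y = x ∨ f x y = y) : LinearOrder α where
  le x y := f x y = y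
  le_refl x := (sel x x).elim id id
  le_trans x y z (hxy : f x y = y) (hyz : f y z = z) := show f x z = z by
    rw [← hyz, ← assoc, hxy]
  le_antisymm x y (hxy : f x y = y) (hyx : f y x = x) := by rw [← hyx, comm, hxy]
  le_total x y := (sel x y).elim (fun h => Or.inr (by rwa [comm] at h)) Or.inl
  toDecidableLE := Classical.decRel _
  max := f
  max_def x y := by
    split_ifs with h
    · exact h
    · exact (sel x y).resolve_right h

namespace List2

def Extensional (P : List2 X → X) : Prop :=
  ∀ a b : List2 X, a.ext = b.ext → P a = P b

def StronglyInductive (P : List2 X → X) : Prop :=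
  ∀ x y : X,
    (∀ a b : List2 X, P a = x → P b = y → P (Cat a b) = x) ∨
    (∀ a b : List2 X, P a = x → P b = y → P (Cat a b) = y)

theorem eq_max'_ext_of_apply_cat_eq_max [LinearOrder X] (P : List2 X → X)
    (hsing : ∀ x, P (Sing2 x) = x) (hcat : ∀ a b, P (Cat a b) = max (P a) (P b))
    (a : List2 X) : P a = a.ext.max' a.ext_nonempty := by
  induction a with
  | Sing2 x => simp [hsing, List2.ext]
  | Cat a b iha ihb =>
    rw [hcat, iha, ihb]
    simp only [Finset.max'_eq_sup']
    exact (Finset.sup'_union a.ext_nonempty b.ext_nonempty id).symm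

variable {P : List2 X → X}

theorem apply_sing2 (hP : ∀ a, P a ∈ a.ext) (x : X) : P (Sing2 x) = x := by
  simpa [List2.ext] using hP (Sing2 x)

def pairChoice (P : List2 X → X) (x y : X) : X := P (Cat (Sing2 x) (Sing2 y))

theorem pairChoice_eq_or (hP : ∀ a, P a ∈ a.ext) (x y : X) :
    pairChoice P x y = x ∨ pairChoice P x y = y := by
  simpa [pairChoice, List2.ext] using hP (Cat (Sing2 x) (Sing2 y))

theorem pairChoice_comm (hEXT : Extensional P) (x y : X) :
    pairChoice P x y = pairChoice P y x :=
  hEXT _ _ (Finset.union_comm _ _)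

-- `Cat (Sing2 (P a)) (Sing2 (P b))` has the same pair of values as `(a, b)`.
theorem apply_cat (hP : ∀ a, P a ∈ a.ext) (hSIND : StronglyInductive P) (a b : List2 X) :
    P (Cat a b) = pairChoice P (P a) (P b) := by
  rcases hSIND (P a) (P b) with h | h <;>
    rw [h a b rfl rfl, pairChoice, h _ _ (apply_sing2 hP _) (apply_sing2 hP _)]

theorem pairChoice_assoc (hP : ∀ a, P a ∈ a.ext) (hEXT : Extensional P)
    (hSIND : StronglyInductive P) (x y z : X) :
    pairChoice P (pairChoice P x y) z = pairChoice P x (pairChoice P y z) :=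
  calc pairChoice P (pairChoice P x y) z = P (Cat (Cat (Sing2 x) (Sing2 y)) (Sing2 z)) := by
        rw [apply_cat hP hSIND, apply_sing2 hP]; rfl
    _ = P (Cat (Sing2 x) (Cat (Sing2 y) (Sing2 z))) := hEXT _ _ (Finset.union_assoc _ _ _)
    _ = pairChoice P x (pairChoice P y z) := by
        rw [apply_cat hP hSIND, apply_sing2 hP]; rfl

end List2

/-- A decision procedure on `List2 X` that is extensional and strongly
inductive is rationalizable by choice function: there is a linear order on `X` such
that `P a` is always the maximum of `⟦a⟧`. -/
theorem stmt_5 {X : Type} [DecidableEq X] (P : List2 X → X)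
    (hP : ∀ a : List2 X, P a ∈ a.ext)
    (hEXT : ∀ a b : List2 X, a.ext = b.ext → P a = P b)
    (hSIND : ∀ x y : X,
      (∀ a b : List2 X, P a = x → P b = y → P (List2.Cat a b) = x) ∨
      (∀ a b : List2 X, P a = x → P b = y → P (List2.Cat a b) = y)) :
    ∃ L : LinearOrder X, ∀ a : List2 X,
      P a = @Finset.max' X L a.ext a.ext_nonempty :=
  let L := LinearOrder.ofSelective (List2.pairChoice P) (List2.pairChoice_comm hEXT)
    (List2.pairChoice_assoc hP hEXT hSIND) (List2.pairChoice_eq_or hP)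
  ⟨L, List2.eq_max'_ext_of_apply_cat_eq_max P (List2.apply_sing2 hP) (List2.apply_cat hP hSIND)⟩
end

section
/- Let P be a decision procedure on List2 X that is intensional (INT). Then P satisfies α-extended (αE). -/
variable {X : Type} [DecidableEq X]

/-- `a.subst x y` is `a[y/x]`: replace every occurrence of `x` in `a` by `y`. -/
def List2.subst (x y : X) : List2 X → List2 X
  | .Sing2 z => .Sing2 (if z = x then y else z)
  | .Cat a b => .Cat (a.subst x y) (b.subst x y)

theorem List2.ext_subst (x y : X) : ∀ a : List2 X,
    (a.subst x y).ext = a.ext.image (fun z => if z = x then y else z)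
  | .Sing2 z => by simp [List2.subst, List2.ext]
  | .Cat a b => by
      simp [List2.subst, List2.ext, Finset.image_union, List2.ext_subst x y a,
        List2.ext_subst x y b]

theorem List2.ext_subst_of_mem {x y : X} (hxy : x ≠ y) {a : List2 X} (hy : y ∈ a.ext) :
    (a.subst x y).ext = a.ext.erase x := by
  ext z
  simp only [List2.ext_subst, Finset.mem_image, Finset.mem_erase]
  constructor
  · rintro ⟨w, hw, rfl⟩
    split_ifs with hwx
    · exact ⟨hxy.symm, hy⟩
    · exact ⟨hwx, hw⟩
  · rintro ⟨hzx, hz⟩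
    exact ⟨z, hz, if_neg hzx⟩

theorem List2.subst_subst_swap (x y : X) : ∀ a : List2 X,
    (a.subst y x).subst x y = a.subst x y
  | .Sing2 z => by
      simp only [List2.subst]
      congr 1
      split_ifs <;> simp_all
  | .Cat a b => by
      simp [List2.subst, List2.subst_subst_swap x y a, List2.subst_subst_swap x y b]

def Intensional (P : List2 X → X) : Prop :=
  ∀ (a : List2 X) (x y : X), P a = x → P (a.subst x y) = y

namespace Intensional

variable {P : List2 X → X}

-- Rename the winner to `x` and back: the second renaming also sends the original `x` to `P a`.
theorem apply_subst_self (hP : Intensional P) (a : List2 X) (x : X) :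
    P (a.subst x (P a)) = P a := by
  have h := hP _ x (P a) (hP a (P a) x rfl)
  rwa [List2.subst_subst_swap] at h

theorem exists_ext_eq_sdiff (hP : Intensional P) (S : Finset X) :
    ∀ a : List2 X, P a ∈ a.ext → P a ∉ S → ∃ b : List2 X, b.ext = a.ext \ S ∧ P b = P a := by
  induction S using Finset.induction_on with
  | empty => exact fun a _ _ => ⟨a, Finset.sdiff_empty.symm, rfl⟩
  | insert x S _ ih =>
    intro a hPa hPS
    obtain ⟨hxP, hPS⟩ := not_or.mp (Finset.mem_insert.not.mp hPS)
    have hext : (a.subst x (P a)).ext = a.ext.erase x := List2.ext_subst_of_mem (Ne.symm hxP) hPa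
    have hwin := hP.apply_subst_self a x
    obtain ⟨b, hb, hPb⟩ := ih (a.subst x (P a))
      (by rw [hext, hwin]; exact Finset.mem_erase.mpr ⟨hxP, hPa⟩) (by rwa [hwin])
    refine ⟨b, ?_, hPb.trans hwin⟩
    rw [hb, hext, Finset.sdiff_insert, Finset.erase_sdiff_comm]

end Intensional

theorem stmt_6_general {X : Type} [DecidableEq X] (P : List2 X → X)
    (hINT : ∀ (a : List2 X) (x y : X), P a = x → P (a.subst x y) = y) :
    ∀ (a : List2 X) (B : Finset X), B.Nonempty → P a ∈ B → B ⊆ a.ext →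
      ∃ b : List2 X, b.ext = B ∧ P b = P a := by
  intro a B _ hPB hBa
  obtain ⟨b, hb, hPb⟩ := Intensional.exists_ext_eq_sdiff hINT (a.ext \ B) a (hBa hPB)
    (Finset.notMem_sdiff_of_mem_right hPB)
  exact ⟨b, hb.trans (Finset.sdiff_sdiff_eq_self hBa), hPb⟩

/-- An intensional decision procedure on `List2 X` satisfies
α-extended. -/
theorem stmt_6 {X : Type} [DecidableEq X] (P : List2 X → X)
    (hP : ∀ a : List2 X, P a ∈ a.ext)
    (hINT : ∀ (a : List2 X) (x y : X), P a = x → P (a.subst x y) = y) :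
    ∀ (a : List2 X) (B : Finset X), B.Nonempty → P a ∈ B → B ⊆ a.ext →
      ∃ b : List2 X, b.ext = B ∧ P b = P a :=
  stmt_6_general P hINT
end

section
/- Let P be a decision procedure on List2 X that is both extensional (EXT) and strongly inductive (SIND). Then P satisfies α-extended (αE). -/
variable {X : Type} [DecidableEq X]

/-!
Realize `B` by some `c`. Strong inductivity for the pair `(P a, P c)` gives two cases. If the
left winner is kept, `Cat (Sing2 (P a)) c` represents `B` and is decided as `P a`. If the right
winner is kept, `P (Cat a c) = P c`; but `Cat a c` has the same extension as `a`, so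
extensionality forces `P c = P a`, and `c` itself works.
-/

namespace List2

theorem exists_ext_eq {B : Finset X} (hB : B.Nonempty) : ∃ c : List2 X, c.ext = B := by
  induction hB using Finset.Nonempty.cons_induction with
  | singleton x => exact ⟨Sing2 x, rfl⟩
  | cons x B _ _ ih =>
    obtain ⟨c, rfl⟩ := ih
    exact ⟨Cat (Sing2 x) c, by rw [Finset.cons_eq_insert, Finset.insert_eq]; rfl⟩

theorem ext_cat_of_subset {a c : List2 X} (h : c.ext ⊆ a.ext) : (Cat a c).ext = a.ext :=
  Finset.union_eq_left.mpr h

theorem ext_cat_sing2_of_mem {x : X} {c : List2 X} (h : x ∈ c.ext) :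
    (Cat (Sing2 x) c).ext = c.ext := by
  rw [ext, ext, ← Finset.insert_eq, Finset.insert_eq_self.mpr h]

theorem apply_sing2_of_mem_ext {P : List2 X → X} (hP : ∀ a : List2 X, P a ∈ a.ext) (x : X) :
    P (Sing2 x) = x :=
  Finset.mem_singleton.mp (hP (Sing2 x))

end List2

open List2 in
/-- A decision procedure on `List2 X` that is extensional and strongly
inductive satisfies α-extended. -/
theorem stmt_7 {X : Type} [DecidableEq X] (P : List2 X → X)
    (hP : ∀ a : List2 X, P a ∈ a.ext)
    (hEXT : ∀ a b : List2 X, a.ext = b.ext → P a = P b)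
    (hSIND : ∀ x y : X,
      (∀ a b : List2 X, P a = x → P b = y → P (List2.Cat a b) = x) ∨
      (∀ a b : List2 X, P a = x → P b = y → P (List2.Cat a b) = y)) :
    ∀ (a : List2 X) (B : Finset X), B.Nonempty → P a ∈ B → B ⊆ a.ext →
      ∃ b : List2 X, b.ext = B ∧ P b = P a := by
  intro a B hB hPa hBa
  obtain ⟨c, rfl⟩ := exists_ext_eq hB
  rcases hSIND (P a) (P c) with hleft | hright
  · exact ⟨Cat (Sing2 (P a)) c, ext_cat_sing2_of_mem hPa,
      hleft _ _ (apply_sing2_of_mem_ext hP _) rfl⟩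
  · refine ⟨c, rfl, ?_⟩
    rw [← hright a c rfl rfl]
    exact hEXT _ _ (ext_cat_of_subset hBa)
end

section
/- There exist a type X and a decision procedure P on NList X such that P satisfies α-extended (αE) but P is not strongly inductive (SIND). (For example, on a type with at least three elements, the procedure that returns the single element of a singleton list and otherwise returns the second element of the list.) -/
/-!
Take `P` to return the second element of a list. Then `P` satisfies αE: for `p ∈ B`,
the list `p, p, b₁, …, bₙ` enumerating `B` has extension `B` and second element `p`.
It is not strongly inductive: `P (v, u) = u` but `P (u, v, u) = v ≠ u`, so neither
alternative of SIND holds for `x = y = u`.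
-/

/-- The algebraic datatype `NList X` of nonempty lists. -/
inductive NList (X : Type) : Type where
  | Sing : X → NList X
  | Cons : X → NList X → NList X

/-- The extension of a represented decision problem on `NList`. -/
def NList.ext {X : Type} [DecidableEq X] : NList X → Finset X
  | .Sing x => {x}
  | .Cons x l => {x} ∪ l.ext

namespace NList

variable {X : Type}

def head : NList X → X
  | Sing x => x
  | Cons x _ => x

def ofList : X → List X → NList X
  | x, [] => Sing x
  | x, y :: l => Cons x (ofList y l)

@[simp] lemma head_ofList (x : X) (l : List X) : (ofList x l).head = x := by
  cases l <;> rfl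

def second : NList X → X
  | Sing x => x
  | Cons _ a => a.head

def IsStronglyInductive (P : NList X → X) : Prop :=
  (∀ x : X, P (Sing x) = x) ∧
    ∀ x y : X,
      (∀ a : NList X, P a = y → P (Cons x a) = x) ∨
      (∀ a : NList X, P a = y → P (Cons x a) = y)

lemma not_isStronglyInductive_second [Nontrivial X] :
    ¬IsStronglyInductive (second : NList X → X) := by
  obtain ⟨u, v, huv⟩ := exists_pair_ne X
  rintro ⟨-, hcons⟩
  rcases hcons u u with h | h <;> exact huv.symm (h (Cons v (Sing u)) rfl)

variable [DecidableEq X]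

def IsAlphaExtended (P : NList X → X) : Prop :=
  ∀ (a : NList X) (B : Finset X), B.Nonempty → P a ∈ B → B ⊆ a.ext →
    ∃ b : NList X, b.ext = B ∧ P b = P a

lemma head_mem_ext (a : NList X) : a.head ∈ a.ext := by
  cases a <;> simp [head, ext]

@[simp] lemma ext_ofList (x : X) (l : List X) : (ofList x l).ext = insert x l.toFinset := by
  induction l generalizing x with
  | nil => rfl
  | cons y l ih =>
    simp only [ofList, ext, ih, List.toFinset_cons]
    rfl

lemma exists_ext_eq_of_mem {x : X} {B : Finset X} (hx : x ∈ B) :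
    ∃ a : NList X, a.ext = B ∧ a.head = x :=
  ⟨ofList x B.toList, by simp [hx], head_ofList x _⟩

lemma second_mem_ext (a : NList X) : a.second ∈ a.ext := by
  cases a with
  | Sing x => simp [second, ext]
  | Cons x a => simp [second, ext, head_mem_ext]

lemma isAlphaExtended_second : IsAlphaExtended (second : NList X → X) := by
  intro a B _ hmem _
  obtain ⟨b, hb, hhead⟩ := exists_ext_eq_of_mem hmem
  exact ⟨Cons (second a) b, by simp [ext, hb, hmem], hhead⟩

end NList

/-- There are a type `X` and a decision procedure `P` on `NList X`
that satisfies α-extended but is not strongly inductive. -/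
theorem stmt_9 : ∃ (X : Type) (inst : DecidableEq X),
    letI := inst
    ∃ P : NList X → X,
      (∀ a : NList X, P a ∈ a.ext) ∧
      -- αE
      (∀ (a : NList X) (B : Finset X), B.Nonempty → P a ∈ B → B ⊆ a.ext →
        ∃ b : NList X, b.ext = B ∧ P b = P a) ∧
      -- not SIND
      ¬((∀ x : X, P (NList.Sing x) = x) ∧
        ∀ x y : X,
          (∀ a : NList X, P a = y → P (NList.Cons x a) = x) ∨
          (∀ a : NList X, P a = y → P (NList.Cons x a) = y)) :=
  ⟨Bool, inferInstance, NList.second, NList.second_mem_ext, NList.isAlphaExtended_second,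
    NList.not_isStronglyInductive_second⟩
end

section
/- There exist a type X and a decision procedure P on Tree X such that P satisfies T-independence of irrelevant alternatives (TIIA) but does not satisfy α-extended (αE). (For example, the larger-sub-problem-bias procedure: fix a linear order on X and a threshold N ≥ 1; on trees a with |⟦a⟧| ≤ N return the maximum of ⟦a⟧, and on a node recurse into the sub-tree whose extension is largest.) -/
/-- The algebraic datatype `Tree3 X` (the paper's `Tree`) of ternary trees with values at the leaves. -/
inductive Tree3 (X : Type) : Type where
  | Leaf : X → Tree3 X
  | Node : Tree3 X → Tree3 X → Tree3 X → Tree3 X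

/-- The extension of a represented decision problem on `Tree3`. -/
def Tree3.ext {X : Type} [DecidableEq X] : Tree3 X → Finset X
  | .Leaf x => {x}
  | .Node t₁ t₂ t₃ => t₁.ext ∪ t₂.ext ∪ t₃.ext

/-!
If the value at a node depends only on the *states* `(⟦tᵢ⟧, P tᵢ)` of its three children, then
`P` is governed by the finite set of reachable states, and TIIA reduces to finitely many checks on
states: the replacement tree `b` is any tree realising a suitable reachable state. Over `Fin 3`
we take the maximum with two exceptional clauses. The reachable states are eleven of the twelve
pairs `(E, v)` with `v ∈ E`; the missing one, `({0, 1}, 0)`, witnesses the failure of αE, since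
`({0, 1, 2}, 0)` is reachable.
-/

namespace Tree3

abbrev State (X : Type) := Finset X × X

variable {X : Type} [DecidableEq X]

def combine (rule : State X → State X → State X → X) (r₁ r₂ r₃ : State X) : State X :=
  (r₁.1 ∪ r₂.1 ∪ r₃.1, rule r₁ r₂ r₃)

def summary (rule : State X → State X → State X → X) : Tree3 X → State X
  | Leaf v => ({v}, v)
  | Node t₁ t₂ t₃ => combine rule (summary rule t₁) (summary rule t₂) (summary rule t₃)

/-- `c r` is the value at a node whose child in a fixed position has state `r`, the other two
children being fixed. -/
def StateTIIA (R : List (State X)) (c : State X → X) : Prop :=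
  ∀ r ∈ R, r.2 ≠ c r → ∃ w : X, (r.1 \ {r.2} ∪ {c r}, w) ∈ R ∧ c (r.1 \ {r.2} ∪ {c r}, w) = c r

section

variable {rule : State X → State X → State X → X} {R : List (State X)}

theorem summary_fst (t : Tree3 X) : (summary rule t).1 = t.ext := by
  induction t with
  | Leaf v => rfl
  | Node t₁ t₂ t₃ ih₁ ih₂ ih₃ => simp only [summary, combine, ext, ih₁, ih₂, ih₃]

theorem summary_eq (t : Tree3 X) : summary rule t = (t.ext, (summary rule t).2) :=
  Prod.ext (summary_fst t) rfl

theorem summary_mem (hleaf : ∀ v, ({v}, v) ∈ R)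
    (hcombine : ∀ r₁ ∈ R, ∀ r₂ ∈ R, ∀ r₃ ∈ R, combine rule r₁ r₂ r₃ ∈ R) (t : Tree3 X) :
    summary rule t ∈ R := by
  induction t with
  | Leaf v => exact hleaf v
  | Node t₁ t₂ t₃ ih₁ ih₂ ih₃ => exact hcombine _ ih₁ _ ih₂ _ ih₃

theorem snd_summary_mem_ext (hmem : ∀ t, summary rule t ∈ R) (hvalid : ∀ r ∈ R, r.2 ∈ r.1)
    (t : Tree3 X) : (summary rule t).2 ∈ t.ext :=
  summary_fst (rule := rule) t ▸ hvalid _ (hmem t)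

theorem summary_tiia (hrealize : ∀ r ∈ R, ∃ t, summary rule t = r)
    {C : Tree3 X → Tree3 X} {c : State X → X}
    (hC : ∀ b, (summary rule (C b)).2 = c (summary rule b)) (hc : StateTIIA R c)
    {t : Tree3 X} (ht : summary rule t ∈ R) (x y : X) (hx : (summary rule (C t)).2 = x)
    (hy : (summary rule t).2 = y) (hyx : y ≠ x) :
    ∃ b : Tree3 X, b.ext = (t.ext \ {y}) ∪ {x} ∧ (summary rule (C b)).2 = x := by
  rw [hC] at hx
  subst hx hy
  obtain ⟨w, hw, hcw⟩ := hc _ ht hyx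
  obtain ⟨b, hb⟩ := hrealize _ hw
  refine ⟨b, ?_, ?_⟩
  · rw [← summary_fst (rule := rule), hb, summary_fst]
  · rw [hC, hb, hcw]

end

namespace MaxWithExceptions

/-- The exceptional clauses are tuned so that `({0, 1, 2}, 0)` is reachable but `({0, 1}, 0)` is
not, while every state-level TIIA check still succeeds. -/
def rule (r₁ r₂ r₃ : State (Fin 3)) : Fin 3 :=
  if r₁ = ({1}, 1) ∧ r₂.2 = 1 then 1
  else if r₁ = ({0}, 0) ∧ r₂.2 = 0 ∧
      (r₃.2 = 0 ∨ (r₃.1 = {2} ∧ 2 ∉ r₂.1) ∨ (1 ∈ r₃.1 ∧ 2 ∈ r₃.1 ∧ r₃.2 ≠ 2)) then 0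
  else if 2 ∈ r₁.1 ∪ r₂.1 ∪ r₃.1 then 2 else if 1 ∈ r₁.1 ∪ r₂.1 ∪ r₃.1 then 1 else 0

def reachable : List (State (Fin 3)) :=
  [({0}, 0), ({1}, 1), ({2}, 2),
   ({0, 1}, 1), ({0, 2}, 0), ({0, 2}, 2), ({1, 2}, 1), ({1, 2}, 2),
   ({0, 1, 2}, 0), ({0, 1, 2}, 1), ({0, 1, 2}, 2)]

def badTree : Tree3 (Fin 3) := .Node (.Leaf 0) (.Leaf 0) (.Node (.Leaf 1) (.Leaf 1) (.Leaf 2))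

def witnesses : List (Tree3 (Fin 3)) :=
  [.Leaf 0, .Leaf 1, .Leaf 2,
   .Node (.Leaf 1) (.Leaf 0) (.Leaf 0), .Node (.Leaf 0) (.Leaf 0) (.Leaf 2),
   .Node (.Leaf 2) (.Leaf 0) (.Leaf 0), .Node (.Leaf 1) (.Leaf 1) (.Leaf 2),
   .Node (.Leaf 2) (.Leaf 1) (.Leaf 1),
   badTree, .Node (.Leaf 1) (.Leaf 1) (.Node (.Leaf 0) (.Leaf 0) (.Leaf 2)),
   .Node (.Leaf 2) (.Leaf 0) (.Leaf 1)]

theorem map_summary_witnesses : witnesses.map (summary rule) = reachable := by decide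

theorem exists_summary_eq : ∀ r ∈ reachable, ∃ t, summary rule t = r := by
  simp only [← map_summary_witnesses, List.mem_map]
  rintro r ⟨t, -, rfl⟩
  exact ⟨t, rfl⟩

theorem summary_mem_reachable : ∀ t, summary rule t ∈ reachable :=
  summary_mem (by decide) (by decide)

theorem snd_mem_fst : ∀ r ∈ reachable, r.2 ∈ r.1 := by decide

theorem stateTIIA_left : ∀ r₂ ∈ reachable, ∀ r₃ ∈ reachable,
    StateTIIA reachable (rule · r₂ r₃) := by
  unfold StateTIIA; decide

theorem stateTIIA_middle : ∀ r₁ ∈ reachable, ∀ r₃ ∈ reachable,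
    StateTIIA reachable (rule r₁ · r₃) := by
  unfold StateTIIA; decide

theorem stateTIIA_right : ∀ r₁ ∈ reachable, ∀ r₂ ∈ reachable,
    StateTIIA reachable (rule r₁ r₂ ·) := by
  unfold StateTIIA; decide

theorem summary_badTree : summary rule badTree = ({0, 1, 2}, 0) := by decide

end MaxWithExceptions

end Tree3

open Tree3 Tree3.MaxWithExceptions in
/-- There are a type `X` and a decision procedure `P` on `Tree3 X`
satisfying T-independence of irrelevant alternatives but not α-extended. -/
theorem stmt_10 : ∃ (X : Type) (inst : DecidableEq X),
    letI := inst
    ∃ P : Tree3 X → X,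
      (∀ a : Tree3 X, P a ∈ a.ext) ∧
      -- TIIA (one clause per sub-tree position)
      (∀ (t₁ t₂ t₃ : Tree3 X) (x y : X), P (Tree3.Node t₁ t₂ t₃) = x → P t₁ = y → y ≠ x →
        ∃ b : Tree3 X, b.ext = (t₁.ext \ {y}) ∪ {x} ∧ P (Tree3.Node b t₂ t₃) = x) ∧
      (∀ (t₁ t₂ t₃ : Tree3 X) (x y : X), P (Tree3.Node t₁ t₂ t₃) = x → P t₂ = y → y ≠ x →
        ∃ b : Tree3 X, b.ext = (t₂.ext \ {y}) ∪ {x} ∧ P (Tree3.Node t₁ b t₃) = x) ∧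
      (∀ (t₁ t₂ t₃ : Tree3 X) (x y : X), P (Tree3.Node t₁ t₂ t₃) = x → P t₃ = y → y ≠ x →
        ∃ b : Tree3 X, b.ext = (t₃.ext \ {y}) ∪ {x} ∧ P (Tree3.Node t₁ t₂ b) = x) ∧
      -- not αE
      ¬(∀ (a : Tree3 X) (B : Finset X), B.Nonempty → P a ∈ B → B ⊆ a.ext →
        ∃ b : Tree3 X, b.ext = B ∧ P b = P a) := by
  have hmem := summary_mem_reachable
  refine ⟨Fin 3, inferInstance, fun a => (summary rule a).2,
    snd_summary_mem_ext hmem snd_mem_fst, fun t₁ t₂ t₃ => ?_, fun t₁ t₂ t₃ => ?_,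
    fun t₁ t₂ t₃ => ?_, fun hαE => ?_⟩
  · exact summary_tiia exists_summary_eq (C := (.Node · t₂ t₃)) (fun _ => rfl)
      (stateTIIA_left _ (hmem t₂) _ (hmem t₃)) (hmem t₁)
  · exact summary_tiia exists_summary_eq (C := (.Node t₁ · t₃)) (fun _ => rfl)
      (stateTIIA_middle _ (hmem t₁) _ (hmem t₃)) (hmem t₂)
  · exact summary_tiia exists_summary_eq (C := (.Node t₁ t₂ ·)) (fun _ => rfl)
      (stateTIIA_right _ (hmem t₁) _ (hmem t₂)) (hmem t₃)
  · obtain ⟨b, hext, hb⟩ := hαE badTree {0, 1} (by decide) (by decide)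
      (by rw [← summary_fst (rule := rule), summary_badTree]; decide)
    change (summary rule b).2 = (summary rule badTree).2 at hb
    have hbad := hmem b
    rw [summary_eq, hext, hb, summary_badTree] at hbad
    exact absurd hbad (by decide)
end

section
/- There exist a type X and a decision procedure P on Tree X such that P satisfies α-extended (αE) but does not satisfy T-independence of irrelevant alternatives (TIIA). (For example, the smaller-sub-problem-bias procedure: fix a linear order on X and a threshold N ≥ 1; on trees a with |⟦a⟧| ≤ N return the maximum of ⟦a⟧, and on a node recurse into the sub-tree whose extension is smallest.) -/
/-!
The counterexample follows the first sub-problem, except that a middle sub-problem with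
extension exactly `{1}` hands the decision to the third one. Any nonempty `B ∋ P a` other
than `{1}` is the extension of `Node (Leaf (P a)) t t` with `⟦t⟧ = B`, whose value is `P a`;
this gives αE. TIIA fails at the middle position: replacing a middle sub-problem with
extension `{1, 2}` and value `2` by one with extension `{1}` switches the decision to the
third sub-problem.
-/

namespace Tree3

variable {X : Type} [DecidableEq X]

theorem exists_ext_eq {B : Finset X} (hB : B.Nonempty) : ∃ t : Tree3 X, t.ext = B := by
  induction B using Finset.induction with
  | empty => simp at hB
  | insert a s _ ih =>
    rcases s.eq_empty_or_nonempty with rfl | hs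
    · exact ⟨Leaf a, rfl⟩
    · obtain ⟨t, ht⟩ := ih hs
      exact ⟨Node (Leaf a) t t, by simp [ext, ht]⟩

def AlphaExtended (P : Tree3 X → X) : Prop :=
  ∀ (a : Tree3 X) (B : Finset X), B.Nonempty → P a ∈ B → B ⊆ a.ext →
    ∃ b : Tree3 X, b.ext = B ∧ P b = P a

def TIIA (P : Tree3 X → X) : Prop :=
  (∀ (t₁ t₂ t₃ : Tree3 X) (x y : X), P (Node t₁ t₂ t₃) = x → P t₁ = y → y ≠ x →
      ∃ b : Tree3 X, b.ext = (t₁.ext \ {y}) ∪ {x} ∧ P (Node b t₂ t₃) = x) ∧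
    (∀ (t₁ t₂ t₃ : Tree3 X) (x y : X), P (Node t₁ t₂ t₃) = x → P t₂ = y → y ≠ x →
      ∃ b : Tree3 X, b.ext = (t₂.ext \ {y}) ∪ {x} ∧ P (Node t₁ b t₃) = x) ∧
    (∀ (t₁ t₂ t₃ : Tree3 X) (x y : X), P (Node t₁ t₂ t₃) = x → P t₃ = y → y ≠ x →
      ∃ b : Tree3 X, b.ext = (t₃.ext \ {y}) ∪ {x} ∧ P (Node t₁ t₂ b) = x)

end Tree3

open Tree3

def switchOnOne : Tree3 ℕ → ℕ
  | .Leaf x => x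
  | .Node a b c => if b.ext = {1} then switchOnOne c else switchOnOne a

theorem switchOnOne_mem_ext (t : Tree3 ℕ) : switchOnOne t ∈ t.ext := by
  induction t with
  | Leaf x => simp [switchOnOne, ext]
  | Node a b c ha _ hc =>
    simp only [switchOnOne, ext]
    split_ifs
    · exact Finset.mem_union_right _ hc
    · exact Finset.mem_union_left _ (Finset.mem_union_left _ ha)

theorem switchOnOne_alphaExtended : AlphaExtended switchOnOne := by
  intro a B hB hmem _
  by_cases hB1 : B = {1}
  · subst hB1
    exact ⟨Leaf 1, rfl, (Finset.mem_singleton.mp hmem).symm⟩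
  · obtain ⟨t, ht⟩ := exists_ext_eq hB
    refine ⟨Node (Leaf (switchOnOne a)) t t, ?_, by simp [switchOnOne, ht, hB1]⟩
    simpa [ext, ht] using hmem

theorem not_tiia_switchOnOne : ¬TIIA switchOnOne := by
  rintro ⟨-, hmiddle, -⟩
  obtain ⟨b, hb, hvalue⟩ :=
    hmiddle (Leaf 1) (Node (Leaf 2) (Leaf 2) (Leaf 1)) (Leaf 0) 1 2
      (by decide) rfl (by decide)
  have hb1 : b.ext = {1} := by rw [hb]; decide
  simp [switchOnOne, hb1] at hvalue

/-- There are a type `X` and a decision procedure `P` on `Tree3 X`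
satisfying α-extended but not T-independence of irrelevant alternatives. -/
theorem stmt_11 : ∃ (X : Type) (inst : DecidableEq X),
    letI := inst
    ∃ P : Tree3 X → X,
      (∀ a : Tree3 X, P a ∈ a.ext) ∧
      -- αE
      (∀ (a : Tree3 X) (B : Finset X), B.Nonempty → P a ∈ B → B ⊆ a.ext →
        ∃ b : Tree3 X, b.ext = B ∧ P b = P a) ∧
      -- not TIIA
      ¬((∀ (t₁ t₂ t₃ : Tree3 X) (x y : X), P (Tree3.Node t₁ t₂ t₃) = x → P t₁ = y → y ≠ x →
          ∃ b : Tree3 X, b.ext = (t₁.ext \ {y}) ∪ {x} ∧ P (Tree3.Node b t₂ t₃) = x) ∧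
        (∀ (t₁ t₂ t₃ : Tree3 X) (x y : X), P (Tree3.Node t₁ t₂ t₃) = x → P t₂ = y → y ≠ x →
          ∃ b : Tree3 X, b.ext = (t₂.ext \ {y}) ∪ {x} ∧ P (Tree3.Node t₁ b t₃) = x) ∧
        (∀ (t₁ t₂ t₃ : Tree3 X) (x y : X), P (Tree3.Node t₁ t₂ t₃) = x → P t₃ = y → y ≠ x →
          ∃ b : Tree3 X, b.ext = (t₃.ext \ {y}) ∪ {x} ∧ P (Tree3.Node t₁ t₂ b) = x)) :=
  ⟨ℕ, inferInstance, switchOnOne, switchOnOne_mem_ext, switchOnOne_alphaExtended,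
    not_tiia_switchOnOne⟩
end

section
/- There exist a type X and a decision procedure P on Tree X such that P satisfies γ⁺-extended (γ⁺E) but P is not strongly inductive (SIND). (For example, the smaller-sub-problem-bias procedure: fix a linear order on X and a threshold N ≥ 1; on trees a with |⟦a⟧| ≤ N return the maximum of ⟦a⟧, and on a node recurse into the sub-tree whose extension is smallest.) -/
namespace Tree3

variable {X : Type} [DecidableEq X]

def IsDecisionProcedure (P : Tree3 X → X) : Prop :=
  ∀ a : Tree3 X, P a ∈ a.ext

def GammaPlusExtended (P : Tree3 X → X) : Prop :=
  ∀ a b : Tree3 X, P b ∈ a.ext → ∃ d : Tree3 X, d.ext = a.ext ∪ b.ext ∧ P d = P a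

def StronglyInductive (P : Tree3 X → X) : Prop :=
  ∀ x₁ x₂ x₃ : X,
    (∀ t₁ t₂ t₃ : Tree3 X, P t₁ = x₁ → P t₂ = x₂ → P t₃ = x₃ → P (Node t₁ t₂ t₃) = x₁) ∨
    (∀ t₁ t₂ t₃ : Tree3 X, P t₁ = x₁ → P t₂ = x₂ → P t₃ = x₃ → P (Node t₁ t₂ t₃) = x₂) ∨
    (∀ t₁ t₂ t₃ : Tree3 X, P t₁ = x₁ → P t₂ = x₂ → P t₃ = x₃ → P (Node t₁ t₂ t₃) = x₃)

/-- The smaller-sub-problem bias procedure with threshold `N = 1`, ties going to the leftmost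
sub-tree. Only leaves have a one-element extension, so no order on `X` is needed. -/
def smallerBias : Tree3 X → X
  | .Leaf x => x
  | .Node t₁ t₂ t₃ =>
    if t₁.ext.card ≤ t₂.ext.card ∧ t₁.ext.card ≤ t₃.ext.card then smallerBias t₁
    else if t₂.ext.card ≤ t₃.ext.card then smallerBias t₂ else smallerBias t₃

theorem isDecisionProcedure_smallerBias : IsDecisionProcedure (smallerBias (X := X)) := by
  intro a
  induction a with
  | Leaf x => simp [smallerBias, ext]
  | Node t₁ t₂ t₃ h₁ h₂ h₃ =>
    simp only [smallerBias, ext, Finset.mem_union]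
    split_ifs
    · exact Or.inl (Or.inl h₁)
    · exact Or.inl (Or.inr h₂)
    · exact Or.inr h₃

theorem one_le_card_ext (t : Tree3 X) : 1 ≤ t.ext.card :=
  Finset.card_pos.mpr ⟨_, isDecisionProcedure_smallerBias t⟩

theorem ext_node_leaf_of_mem {x : X} {a : Tree3 X} (hx : x ∈ a.ext) (b : Tree3 X) :
    (Node (Leaf x) a b).ext = a.ext ∪ b.ext := by
  rw [ext, ext, Finset.union_assoc, Finset.singleton_union, Finset.insert_eq_of_mem]
  exact Finset.mem_union_left _ hx

theorem smallerBias_node_leaf (x : X) (a b : Tree3 X) :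
    smallerBias (Node (Leaf x) a b) = x := by
  rw [smallerBias, if_pos ⟨one_le_card_ext a, one_le_card_ext b⟩]
  rfl

theorem gammaPlusExtended_smallerBias : GammaPlusExtended (smallerBias (X := X)) :=
  fun a b _ => ⟨Node (Leaf (smallerBias a)) a b,
    ext_node_leaf_of_mem (isDecisionProcedure_smallerBias a) b, smallerBias_node_leaf _ a b⟩

theorem not_stronglyInductive_smallerBias [Nontrivial X] :
    ¬ StronglyInductive (smallerBias (X := X)) := by
  obtain ⟨x, y, hxy⟩ := exists_pair_ne X
  intro hSI
  rcases hSI x y y with h | h | h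
  · have hcard : (Node (Leaf x) (Leaf x) (Leaf y)).ext.card = 2 := by simp [ext, hxy]
    have hanswer := h (Node (Leaf x) (Leaf x) (Leaf y)) (Leaf y) (Leaf y) (smallerBias_node_leaf ..) rfl rfl
    rw [smallerBias, if_neg (by rw [hcard]; simp [ext]), if_pos le_rfl] at hanswer
    exact hxy hanswer.symm
  · exact hxy (h (Leaf x) (Leaf y) (Leaf y) rfl rfl rfl)
  · exact hxy (h (Leaf x) (Leaf y) (Leaf y) rfl rfl rfl)

end Tree3

/-- There are a type `X` and a decision procedure `P` on `Tree3 X`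
satisfying γ⁺-extended but not strongly inductive. -/
theorem stmt_14 : ∃ (X : Type) (inst : DecidableEq X),
    letI := inst
    ∃ P : Tree3 X → X,
      (∀ a : Tree3 X, P a ∈ a.ext) ∧
      -- γ⁺E
      (∀ a b : Tree3 X, P b ∈ a.ext →
        ∃ d : Tree3 X, d.ext = a.ext ∪ b.ext ∧ P d = P a) ∧
      -- not SIND
      ¬(∀ x₁ x₂ x₃ : X,
          (∀ t₁ t₂ t₃ : Tree3 X, P t₁ = x₁ → P t₂ = x₂ → P t₃ = x₃ →
            P (Tree3.Node t₁ t₂ t₃) = x₁) ∨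
          (∀ t₁ t₂ t₃ : Tree3 X, P t₁ = x₁ → P t₂ = x₂ → P t₃ = x₃ →
            P (Tree3.Node t₁ t₂ t₃) = x₂) ∨
          (∀ t₁ t₂ t₃ : Tree3 X, P t₁ = x₁ → P t₂ = x₂ → P t₃ = x₃ →
            P (Tree3.Node t₁ t₂ t₃) = x₃)) :=
  ⟨Bool, inferInstance, Tree3.smallerBias, Tree3.isDecisionProcedure_smallerBias,
    Tree3.gammaPlusExtended_smallerBias, Tree3.not_stronglyInductive_smallerBias⟩
end

section
/- There exist a type X and a decision procedure P on List2 X such that P is extensional (EXT) but does not satisfy γ⁺-extended (γ⁺E). (For example, the choose-default-on-large-problems procedure: fix a linear order on X, a default element x* : X and a threshold N; return x* whenever x* ∈ ⟦a⟧ and |⟦a⟧| > N, and otherwise return the maximum of ⟦a⟧.) -/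
variable {X : Type} [DecidableEq X]

/-! The procedure returns a default `x₀` on problems with more than two alternatives containing it
and the maximum otherwise. On `a = ⟦y, z⟧` and `b = ⟦x₀, z⟧` with `y, x₀ < z` it picks `z` for
both, so `P b ∈ ⟦a⟧`; but every `d` with `⟦d⟧ = {x₀, y, z}` is large and gets `x₀ ≠ z = P a`. -/

namespace List2

def GammaPlusExtended (P : List2 X → X) : Prop :=
  ∀ a b : List2 X, P b ∈ a.ext → ∃ d : List2 X, d.ext = a.ext ∪ b.ext ∧ P d = P a

section DefaultOnLarge

variable [LinearOrder X] {x₀ : X} {N : ℕ} {a b : List2 X}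

def defaultOnLarge (x₀ : X) (N : ℕ) (a : List2 X) : X :=
  if x₀ ∈ a.ext ∧ N < a.ext.card then x₀ else a.ext.max' a.ext_nonempty

theorem defaultOnLarge_mem : defaultOnLarge x₀ N a ∈ a.ext := by
  unfold defaultOnLarge
  split_ifs with h
  exacts [h.1, Finset.max'_mem _ _]

theorem defaultOnLarge_congr (h : a.ext = b.ext) :
    defaultOnLarge x₀ N a = defaultOnLarge x₀ N b := by
  simp [defaultOnLarge, h]

theorem defaultOnLarge_of_lt_card (hx₀ : x₀ ∈ a.ext) (hN : N < a.ext.card) :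
    defaultOnLarge x₀ N a = x₀ :=
  if_pos ⟨hx₀, hN⟩

theorem defaultOnLarge_of_notMem (hx₀ : x₀ ∉ a.ext) :
    defaultOnLarge x₀ N a = a.ext.max' a.ext_nonempty :=
  if_neg fun h => hx₀ h.1

theorem defaultOnLarge_of_card_le (hN : a.ext.card ≤ N) :
    defaultOnLarge x₀ N a = a.ext.max' a.ext_nonempty :=
  if_neg fun h => (h.2.trans_le hN).false

theorem max'_ext_cat_sing2 {x y : X} (h : x ≤ y) :
    (Cat (Sing2 x) (Sing2 y)).ext.max' (ext_nonempty _) = y :=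
  le_antisymm (Finset.max'_le _ _ _ (by simp [ext, h])) (Finset.le_max' _ _ (by simp [ext]))

theorem not_gammaPlusExtended_defaultOnLarge {y z : X} (hx₀y : x₀ ≠ y) (hx₀z : x₀ < z)
    (hyz : y < z) : ¬GammaPlusExtended (defaultOnLarge x₀ 2) := by
  intro H
  have hPa : defaultOnLarge x₀ 2 (Cat (Sing2 y) (Sing2 z)) = z := by
    rw [defaultOnLarge_of_notMem (by simp [ext, hx₀y, hx₀z.ne]), max'_ext_cat_sing2 hyz.le]
  have hPb : defaultOnLarge x₀ 2 (Cat (Sing2 x₀) (Sing2 z)) = z := by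
    rw [defaultOnLarge_of_card_le (by simp [ext, Finset.card_le_two]), max'_ext_cat_sing2 hx₀z.le]
  obtain ⟨d, hd, hPd⟩ := H (Cat (Sing2 y) (Sing2 z)) (Cat (Sing2 x₀) (Sing2 z))
    (by simp [hPb, ext])
  have hd' : d.ext = {x₀, y, z} := by
    ext; simp [hd, ext]
  have hcard : d.ext.card = 3 := by
    rw [hd', Finset.card_eq_three]
    exact ⟨x₀, y, z, hx₀y, hx₀z.ne, hyz.ne, rfl⟩
  rw [defaultOnLarge_of_lt_card (by simp [hd']) (by omega), hPa] at hPd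
  exact hx₀z.ne hPd

end DefaultOnLarge

end List2

/-- There are a type `X` and a decision procedure `P` on `List2 X`
that is extensional but does not satisfy γ⁺-extended. -/
theorem stmt_15 : ∃ (X : Type) (inst : DecidableEq X),
    letI := inst
    ∃ P : List2 X → X,
      (∀ a : List2 X, P a ∈ a.ext) ∧
      -- EXT
      (∀ a b : List2 X, a.ext = b.ext → P a = P b) ∧
      -- not γ⁺E
      ¬(∀ a b : List2 X, P b ∈ a.ext →
        ∃ d : List2 X, d.ext = a.ext ∪ b.ext ∧ P d = P a) :=
  ⟨ℕ, inferInstance, List2.defaultOnLarge 0 2, fun _ => List2.defaultOnLarge_mem,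
    fun _ _ => List2.defaultOnLarge_congr,
    List2.not_gammaPlusExtended_defaultOnLarge (y := 1) (z := 2) (by norm_num) (by norm_num)
      (by norm_num)⟩
end

section
/- There exist a type X and a decision procedure P on Tree X such that P satisfies T-independence of irrelevant alternatives (TIIA) but P is not strongly inductive (SIND). (For example, the larger-sub-problem-bias procedure: fix a linear order on X and a threshold N ≥ 1; on trees a with |⟦a⟧| ≤ N return the maximum of ⟦a⟧, and on a node recurse into the sub-tree whose extension is largest.) -/
/-!
The procedure below descends into the first subtree when its extension has at least two
elements and into the second one otherwise, never looking at the third. TIIA then holds slot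
by slot: the third subtree is irrelevant; if the value comes from `t₁`, then `t₂` is
irrelevant; and if it comes from `t₂` past a `t₁` with value `y ≠ x`, then `⟦t₁⟧ = {y}`,
so replacing `t₁` by the leaf `x` keeps it a singleton. It is not strongly inductive because
whether the first or the second subvalue wins depends on the size of `⟦t₁⟧`, not only on the
subvalues.
-/

namespace Tree3

variable {X : Type} [DecidableEq X]

theorem exists_ext_eq_s17 {s : Finset X} (hs : s.Nonempty) : ∃ b : Tree3 X, b.ext = s := by
  induction s using Finset.induction with
  | empty => exact absurd hs Finset.not_nonempty_empty
  | @insert a s _ ih =>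
    rcases s.eq_empty_or_nonempty with rfl | hs'
    · exact ⟨Leaf a, rfl⟩
    · obtain ⟨b, hb⟩ := ih hs'
      refine ⟨Node (Leaf a) b b, ?_⟩
      simp only [ext, hb, Finset.union_assoc, Finset.union_self, Finset.insert_eq]

def firstNontrivialChoice : Tree3 X → X
  | Leaf x => x
  | Node t₁ t₂ _ =>
    if t₁.ext.Nontrivial then firstNontrivialChoice t₁ else firstNontrivialChoice t₂

local notation "P" => firstNontrivialChoice

theorem firstNontrivialChoice_mem_ext : ∀ a : Tree3 X, P a ∈ a.ext
  | Leaf x => Finset.mem_singleton_self x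
  | Node t₁ t₂ t₃ => by
    unfold firstNontrivialChoice ext
    split_ifs
    · exact Finset.mem_union_left _ (Finset.mem_union_left _ (firstNontrivialChoice_mem_ext t₁))
    · exact Finset.mem_union_left _ (Finset.mem_union_right _ (firstNontrivialChoice_mem_ext t₂))

theorem firstNontrivialChoice_node_of_nontrivial {t₁ : Tree3 X} (h : t₁.ext.Nontrivial)
    (t₂ t₃ : Tree3 X) : P (Node t₁ t₂ t₃) = P t₁ := by
  simp [firstNontrivialChoice, h]

theorem firstNontrivialChoice_node_of_not_nontrivial {t₁ : Tree3 X} (h : ¬t₁.ext.Nontrivial)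
    (t₂ t₃ : Tree3 X) : P (Node t₁ t₂ t₃) = P t₂ := by
  simp [firstNontrivialChoice, h]

theorem ext_eq_singleton_of_not_nontrivial {t : Tree3 X} (h : ¬t.ext.Nontrivial) :
    t.ext = {P t} := by
  simpa using (Finset.nontrivial_iff_ne_singleton (firstNontrivialChoice_mem_ext t)).not.mp h

theorem firstNontrivialChoice_tiia_first (t₁ t₂ t₃ : Tree3 X) (x y : X)
    (hx : P (Node t₁ t₂ t₃) = x) (hy : P t₁ = y) (hyx : y ≠ x) :
    ∃ b : Tree3 X, b.ext = (t₁.ext \ {y}) ∪ {x} ∧ P (Node b t₂ t₃) = x := by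
  have h₁ : ¬t₁.ext.Nontrivial := fun h ↦
    hyx (hy ▸ hx ▸ (firstNontrivialChoice_node_of_nontrivial h t₂ t₃).symm)
  have hx₂ : P t₂ = x := (firstNontrivialChoice_node_of_not_nontrivial h₁ t₂ t₃).symm.trans hx
  refine ⟨Leaf x, by simp [ext, ext_eq_singleton_of_not_nontrivial h₁, hy], ?_⟩
  rw [firstNontrivialChoice_node_of_not_nontrivial (by simp [ext]), hx₂]

theorem firstNontrivialChoice_tiia_second (t₁ t₂ t₃ : Tree3 X) (x y : X)
    (hx : P (Node t₁ t₂ t₃) = x) (hy : P t₂ = y) (hyx : y ≠ x) :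
    ∃ b : Tree3 X, b.ext = (t₂.ext \ {y}) ∪ {x} ∧ P (Node t₁ b t₃) = x := by
  have h₁ : t₁.ext.Nontrivial := by
    by_contra h
    exact hyx (hy ▸ hx ▸ (firstNontrivialChoice_node_of_not_nontrivial h t₂ t₃).symm)
  obtain ⟨b, hb⟩ := exists_ext_eq_s17 (s := (t₂.ext \ {y}) ∪ {x}) ⟨x, by simp⟩
  refine ⟨b, hb, ?_⟩
  rw [firstNontrivialChoice_node_of_nontrivial h₁, ← hx,
    firstNontrivialChoice_node_of_nontrivial h₁]

theorem firstNontrivialChoice_tiia_third (t₁ t₂ t₃ : Tree3 X) (x y : X)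
    (hx : P (Node t₁ t₂ t₃) = x) :
    ∃ b : Tree3 X, b.ext = (t₃.ext \ {y}) ∪ {x} ∧ P (Node t₁ t₂ b) = x := by
  obtain ⟨b, hb⟩ := exists_ext_eq_s17 (s := (t₃.ext \ {y}) ∪ {x}) ⟨x, by simp⟩
  exact ⟨b, hb, hx⟩

theorem firstNontrivialChoice_not_stronglyInductive {x₁ x₂ x₃ : X} (h₁₂ : x₁ ≠ x₂)
    (h₂₃ : x₂ ≠ x₃) :
    ¬(∀ t₁ t₂ t₃ : Tree3 X, P t₁ = x₁ → P t₂ = x₂ → P t₃ = x₃ → P (Node t₁ t₂ t₃) = x₁) ∧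
    ¬(∀ t₁ t₂ t₃ : Tree3 X, P t₁ = x₁ → P t₂ = x₂ → P t₃ = x₃ → P (Node t₁ t₂ t₃) = x₂) ∧
    ¬(∀ t₁ t₂ t₃ : Tree3 X, P t₁ = x₁ → P t₂ = x₂ → P t₃ = x₃ → P (Node t₁ t₂ t₃) = x₃) := by
  have leaves : P (Node (Leaf x₁) (Leaf x₂) (Leaf x₃)) = x₂ :=
    firstNontrivialChoice_node_of_not_nontrivial Finset.not_nontrivial_singleton _ _
  -- `⟦t⟧ = {x₂, x₁}` is nontrivial and `P t = x₁`, so `Node t (Leaf x₂) _` picks `x₁`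
  set t : Tree3 X := Node (Leaf x₂) (Leaf x₁) (Leaf x₁)
  have ht : t.ext.Nontrivial := ⟨x₂, by simp [t, ext], x₁, by simp [t, ext], h₁₂.symm⟩
  have hPt : P t = x₁ :=
    firstNontrivialChoice_node_of_not_nontrivial Finset.not_nontrivial_singleton _ _
  refine ⟨fun h ↦ h₁₂ ?_, fun h ↦ h₁₂ ?_, fun h ↦ h₂₃ ?_⟩
  · exact (h _ _ _ rfl rfl rfl).symm.trans leaves
  · exact (firstNontrivialChoice_node_of_nontrivial ht _ _).symm.trans
      (h t (Leaf x₂) (Leaf x₃) hPt rfl rfl)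
  · exact leaves.symm.trans (h _ _ _ rfl rfl rfl)

end Tree3

open Tree3 in
/-- There are a type `X` and a decision procedure `P` on `Tree3 X`
satisfying T-independence of irrelevant alternatives but not strongly inductive. -/
theorem stmt_17 : ∃ (X : Type) (inst : DecidableEq X),
    letI := inst
    ∃ P : Tree3 X → X,
      (∀ a : Tree3 X, P a ∈ a.ext) ∧
      -- TIIA
      (∀ (t₁ t₂ t₃ : Tree3 X) (x y : X), P (Tree3.Node t₁ t₂ t₃) = x → P t₁ = y → y ≠ x →
        ∃ b : Tree3 X, b.ext = (t₁.ext \ {y}) ∪ {x} ∧ P (Tree3.Node b t₂ t₃) = x) ∧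
      (∀ (t₁ t₂ t₃ : Tree3 X) (x y : X), P (Tree3.Node t₁ t₂ t₃) = x → P t₂ = y → y ≠ x →
        ∃ b : Tree3 X, b.ext = (t₂.ext \ {y}) ∪ {x} ∧ P (Tree3.Node t₁ b t₃) = x) ∧
      (∀ (t₁ t₂ t₃ : Tree3 X) (x y : X), P (Tree3.Node t₁ t₂ t₃) = x → P t₃ = y → y ≠ x →
        ∃ b : Tree3 X, b.ext = (t₃.ext \ {y}) ∪ {x} ∧ P (Tree3.Node t₁ t₂ b) = x) ∧
      -- not SIND
      ¬(∀ x₁ x₂ x₃ : X,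
          (∀ t₁ t₂ t₃ : Tree3 X, P t₁ = x₁ → P t₂ = x₂ → P t₃ = x₃ →
            P (Tree3.Node t₁ t₂ t₃) = x₁) ∨
          (∀ t₁ t₂ t₃ : Tree3 X, P t₁ = x₁ → P t₂ = x₂ → P t₃ = x₃ →
            P (Tree3.Node t₁ t₂ t₃) = x₂) ∨
          (∀ t₁ t₂ t₃ : Tree3 X, P t₁ = x₁ → P t₂ = x₂ → P t₃ = x₃ →
            P (Tree3.Node t₁ t₂ t₃) = x₃)) := by
  refine ⟨ℕ, inferInstance, firstNontrivialChoice, firstNontrivialChoice_mem_ext,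
    firstNontrivialChoice_tiia_first, firstNontrivialChoice_tiia_second,
    fun t₁ t₂ t₃ x y hx _ _ ↦ firstNontrivialChoice_tiia_third t₁ t₂ t₃ x y hx, fun h ↦ ?_⟩
  obtain ⟨not_first, not_second, not_third⟩ :=
    firstNontrivialChoice_not_stronglyInductive (x₁ := 0) (x₂ := 1) (x₃ := 2) one_ne_zero.symm
      (by decide)
  exact (h 0 1 2).elim not_first (Or.elim · not_second not_third)
end

section
/- Let P be a decision procedure on List2 X that is intensional (INT). Then the choice correspondence C_P is rationalizable, i.e. there exists a complete and transitive relation ⪰ on X such that for every nonempty finite A : Finset X, C_P(A) = {x ∈ A : ∀ y ∈ A, x ⪰ y}. -/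
variable {X : Type} [DecidableEq X]

theorem exists_ne_ne_of_not_forall {α : Type} (hα : ¬ ∀ u v w : α, u = v ∨ u = w ∨ v = w)
    (b c : α) : ∃ w, w ≠ b ∧ w ≠ c := by
  push Not at hα
  obtain ⟨p, q, r, hpq, hpr, hqr⟩ := hα
  by_contra! H
  rcases eq_or_ne p b with rfl | hpb
  · exact hqr ((H q hpq.symm).trans (H r hpr.symm).symm)
  rcases eq_or_ne q b with rfl | hqb
  · exact hpr ((H p hpb).trans (H r hqr.symm).symm)
  · exact hpq ((H p hpb).trans (H q hqb).symm)

namespace List2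

section Map

variable {α β γ : Type}

def map (f : α → β) : List2 α → List2 β
  | .Sing2 z => .Sing2 (f z)
  | .Cat a b => .Cat (a.map f) (b.map f)

theorem map_map (f : α → β) (g : β → γ) (a : List2 α) :
    (a.map f).map g = a.map (g ∘ f) := by
  induction a with
  | Sing2 z => rfl
  | Cat a b iha ihb => simp only [map, iha, ihb]

theorem map_id (a : List2 α) : a.map id = a := by
  induction a with
  | Sing2 z => rfl
  | Cat a b iha ihb => simp only [map, iha, ihb]

variable [DecidableEq α]

theorem map_congr {f g : α → β} {a : List2 α} (h : ∀ c ∈ a.ext, f c = g c) :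
    a.map f = a.map g := by
  induction a with
  | Sing2 z => simp_all [map, List2.ext]
  | Cat a b iha ihb =>
    simp only [List2.ext, Finset.mem_union] at h
    rw [map, map, iha fun c hc => h c (.inl hc), ihb fun c hc => h c (.inr hc)]

theorem ext_map [DecidableEq β] (f : α → β) (a : List2 α) :
    (a.map f).ext = a.ext.image f := by
  induction a with
  | Sing2 z => simp [map, List2.ext]
  | Cat a b iha ihb => simp [map, List2.ext, iha, ihb, Finset.image_union]

end Map

theorem subst_eq_map (x y : X) (a : List2 X) :
    a.subst x y = a.map fun z => if z = x then y else z := by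
  induction a with
  | Sing2 z => rfl
  | Cat a b iha ihb => simp only [List2.subst, map, iha, ihb]

theorem exists_ext_eq_s18 {A : Finset X} (hA : A.Nonempty) : ∃ a : List2 X, a.ext = A := by
  induction hA using Finset.Nonempty.cons_induction with
  | singleton x => exact ⟨.Sing2 x, rfl⟩
  | cons x s _ _ ih =>
    obtain ⟨a, rfl⟩ := ih
    exact ⟨.Cat (.Sing2 x) a, by rw [Finset.cons_eq_insert, Finset.insert_eq]; rfl⟩

end List2

variable {P : List2 X → X}

theorem apply_sing2 (hP : ∀ a : List2 X, P a ∈ a.ext) (x : X) : P (.Sing2 x) = x := by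
  simpa [List2.ext] using hP (.Sing2 x)

theorem exists_choice_map_collapse (hP : ∀ a : List2 X, P a ∈ a.ext)
    (hINT : ∀ (a : List2 X) (x y : X), P a = x → P (a.subst x y) = y) {x : X} (a : List2 X)
    (ha : P a ≠ x) : ∃ w ≠ x, P (a.map fun c => if c = x then x else w) = w := by
  induction h : (a.ext.erase x).card using Nat.strong_induction_on generalizing a with
  | _ n ih =>
    set z := P a
    by_cases hall : ∀ c ∈ a.ext, c = x ∨ c = z
    · refine ⟨z, ha, ?_⟩
      rw [List2.map_congr (g := id) fun c hc => ?_, List2.map_id]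
      rcases hall c hc with rfl | rfl <;> simp [ha]
    push Not at hall
    obtain ⟨w', hw'a, hw'x, hw'z⟩ := hall
    have hzmem : z ∈ a.ext.erase x := Finset.mem_erase.2 ⟨ha, hP a⟩
    have hsub : (a.subst z w').ext ⊆ a.ext.erase z := by
      intro c hc
      simp only [List2.subst_eq_map, List2.ext_map, Finset.mem_image] at hc
      obtain ⟨d, hd, rfl⟩ := hc
      split_ifs with hdz
      · exact Finset.mem_erase.2 ⟨hw'z, hw'a⟩
      · exact Finset.mem_erase.2 ⟨hdz, hd⟩
    have hlt : ((a.subst z w').ext.erase x).card < n := by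
      rw [← h]
      refine Finset.card_lt_card ((Finset.erase_subset_erase x hsub).trans_ssubset ?_)
      rw [Finset.erase_right_comm]
      exact Finset.erase_ssubset hzmem
    obtain ⟨w, hwx, hw⟩ := ih _ hlt (a.subst z w') (by rw [hINT a z w' rfl]; exact hw'x) rfl
    have hcomp : ((fun c => if c = x then x else w) ∘ fun c => if c = z then w' else c) =
        fun c => if c = x then x else w := by
      funext c
      by_cases hc : c = z <;> simp [hc, hw'x, ha]
    rw [List2.subst_eq_map, List2.map_map, hcomp] at hw
    exact ⟨w, hwx, hw⟩

section TwoLabels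

variable (t : List2 Bool)

theorem choice_cond_eq_or (hP : ∀ a : List2 X, P a ∈ a.ext) (u v : X) :
    P (t.map (cond · u v)) = u ∨ P (t.map (cond · u v)) = v := by
  have hmem := hP (t.map (cond · u v))
  rw [List2.ext_map] at hmem
  obtain ⟨b, -, hb⟩ := Finset.mem_image.1 hmem
  cases b
  · exact .inr hb.symm
  · exact .inl hb.symm

theorem subst_map_cond (u v x y : X) :
    (t.map (cond · u v)).subst x y =
      t.map (cond · (if u = x then y else u) (if v = x then y else v)) := by
  rw [List2.subst_eq_map, List2.map_map]
  congr 1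
  funext b
  cases b <;> rfl

variable {t}

theorem choice_cond_left (hINT : ∀ (a : List2 X) (x y : X), P a = x → P (a.subst x y) = y)
    {u v : X} (c : X) (huv : u ≠ v) (h : P (t.map (cond · u v)) = u) :
    P (t.map (cond · c v)) = c := by
  simpa [subst_map_cond, huv.symm] using hINT _ u c h

theorem choice_cond_right (hP : ∀ a : List2 X, P a ∈ a.ext)
    (hINT : ∀ (a : List2 X) (x y : X), P a = x → P (a.subst x y) = y)
    {u c v : X} (huc : u ≠ c) (huv : u ≠ v) (h : P (t.map (cond · u c)) = u) :
    P (t.map (cond · u v)) = u := by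
  refine (choice_cond_eq_or t hP u v).resolve_right fun hv => huc ?_
  rw [← h]
  simpa [subst_map_cond, huv] using hINT _ v c hv

theorem choice_cond_of_choice_cond (hP : ∀ a : List2 X, P a ∈ a.ext)
    (hINT : ∀ (a : List2 X) (x y : X), P a = x → P (a.subst x y) = y)
    (hX : ∀ b c : X, ∃ w, w ≠ b ∧ w ≠ c) {a b : X} (u v : X) (hab : a ≠ b)
    (h : P (t.map (cond · a b)) = a) : P (t.map (cond · u v)) = u := by
  obtain ⟨w, hwb, hwv⟩ := hX b v
  exact choice_cond_left hINT u hwv <|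
    choice_cond_right hP hINT hwb hwv <| choice_cond_left hINT w hab h

end TwoLabels

theorem exists_ext_eq_choice_eq (hP : ∀ a : List2 X, P a ∈ a.ext)
    (hINT : ∀ (a : List2 X) (x y : X), P a = x → P (a.subst x y) = y)
    (hX : ∀ b c : X, ∃ w, w ≠ b ∧ w ≠ c) {A : Finset X} {x : X} (hx : x ∈ A) :
    ∃ a : List2 X, a.ext = A ∧ P a = x := by
  rcases (A.erase x).eq_empty_or_nonempty with hA | hA
  · refine ⟨.Sing2 x, ?_, apply_sing2 hP x⟩
    rw [Finset.erase_eq_empty_iff] at hA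
    rcases hA with rfl | rfl
    · simp at hx
    · rfl
  obtain ⟨b, hb⟩ := List2.exists_ext_eq_s18 hA
  have hconst : (b.map fun _ => x).ext = {x} := by
    rw [List2.ext_map, Finset.image_const (hb ▸ hA)]
  have hbx : ∀ c ∈ b.ext, c ≠ x := fun c hc => (Finset.mem_erase.1 (hb ▸ hc)).1
  by_contra! H
  obtain ⟨w₁, hw₁, h₁⟩ := exists_choice_map_collapse hP hINT (.Cat (b.map fun _ => x) b)
    (H _ (by rw [List2.ext, hconst, hb, ← Finset.insert_eq, Finset.insert_erase hx]))
  obtain ⟨w₂, hw₂, h₂⟩ := exists_choice_map_collapse hP hINT (.Cat b (b.map fun _ => x))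
    (H _ (by rw [List2.ext, hconst, hb, Finset.union_comm, ← Finset.insert_eq,
      Finset.insert_erase hx]))
  set t : List2 Bool := .Cat (b.map fun _ => true) (b.map fun _ => false)
  have e₁ : (List2.Cat (b.map fun _ => x) b).map (fun c => if c = x then x else w₁) =
      t.map (cond · x w₁) := by
    simp only [t, List2.map, List2.map_map]
    congr 1
    · simp [Function.comp_def]
    · exact List2.map_congr fun c hc => by simp [hbx c hc]
  have e₂ : (List2.Cat b (b.map fun _ => x)).map (fun c => if c = x then x else w₂) =
      t.map (cond · w₂ x) := by
    simp only [t, List2.map, List2.map_map]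
    congr 1
    · exact List2.map_congr fun c hc => by simp [hbx c hc]
    · simp [Function.comp_def]
  rw [e₁] at h₁
  rw [e₂] at h₂
  exact hw₁ ((choice_cond_of_choice_cond hP hINT hX x w₁ hw₂ h₂).symm.trans h₁).symm

def RevealedPref (P : List2 X → X) (x y : X) : Prop :=
  ∃ a : List2 X, y ∈ a.ext ∧ P a = x

theorem revealedPref_total (hP : ∀ a : List2 X, P a ∈ a.ext) (x y : X) :
    RevealedPref P x y ∨ RevealedPref P y x := by
  have hmem := hP (.Cat (.Sing2 x) (.Sing2 y))
  simp only [List2.ext, Finset.mem_union, Finset.mem_singleton] at hmem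
  rcases hmem with h | h
  · exact .inl ⟨_, by simp [List2.ext], h⟩
  · exact .inr ⟨_, by simp [List2.ext], h⟩

theorem RevealedPref.trans_of_card_le_two (hP : ∀ a : List2 X, P a ∈ a.ext)
    (hX : ∀ u v w : X, u = v ∨ u = w ∨ v = w) {u v w : X} (huv : RevealedPref P u v)
    (hvw : RevealedPref P v w) : RevealedPref P u w := by
  rcases hX u v w with rfl | rfl | rfl
  · exact hvw
  · exact ⟨.Sing2 u, by simp [List2.ext], apply_sing2 hP u⟩
  · exact huv

theorem exists_ext_eq_choice_eq_of_card_le_two (hP : ∀ a : List2 X, P a ∈ a.ext)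
    (hX : ∀ u v w : X, u = v ∨ u = w ∨ v = w) {A : Finset X} {x : X} (hx : x ∈ A)
    (hR : ∀ y ∈ A, RevealedPref P x y) : ∃ a : List2 X, a.ext = A ∧ P a = x := by
  by_cases hA : ∃ y ∈ A, y ≠ x
  · obtain ⟨y, hy, hyx⟩ := hA
    obtain ⟨a, hya, rfl⟩ := hR y hy
    refine ⟨a, Finset.ext fun c => ?_, rfl⟩
    rcases hX c (P a) y with rfl | rfl | h
    · exact iff_of_true (hP a) hx
    · exact iff_of_true hya hy
    · exact absurd h.symm hyx
  · push Not at hA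
    exact ⟨.Sing2 x, (Finset.eq_singleton_iff_unique_mem.2 ⟨hx, hA⟩).symm, apply_sing2 hP x⟩

/-- For an intensional decision procedure on `List2 X`, the choice
correspondence `C_P` is rationalizable by a complete and transitive relation. -/
theorem stmt_18 {X : Type} [DecidableEq X] (P : List2 X → X)
    (hP : ∀ a : List2 X, P a ∈ a.ext)
    (hINT : ∀ (a : List2 X) (x y : X), P a = x → P (a.subst x y) = y) :
    ∃ R : X → X → Prop, (∀ x y : X, R x y ∨ R y x) ∧ Transitive R ∧
      ∀ A : Finset X, A.Nonempty →
        {x : X | ∃ a : List2 X, a.ext = A ∧ P a = x} =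
          {x : X | x ∈ A ∧ ∀ y ∈ A, R x y} := by
  have chosen_mem {A : Finset X} {x : X} : (∃ a : List2 X, a.ext = A ∧ P a = x) → x ∈ A :=
    fun ⟨a, ha, hx⟩ => ha ▸ hx ▸ hP a
  by_cases hX : ∀ u v w : X, u = v ∨ u = w ∨ v = w
  · refine ⟨RevealedPref P, revealedPref_total hP,
      fun _ _ _ => RevealedPref.trans_of_card_le_two hP hX,
      fun A _ => Set.ext fun x => ⟨fun h => ⟨chosen_mem h, fun y hy => ?_⟩,
        fun ⟨hx, hR⟩ => exists_ext_eq_choice_eq_of_card_le_two hP hX hx hR⟩⟩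
    obtain ⟨a, rfl, rfl⟩ := h
    exact ⟨a, hy, rfl⟩
  · exact ⟨fun _ _ => True, fun _ _ => .inl trivial, fun _ _ _ _ _ => trivial,
      fun A _ => Set.ext fun x => ⟨fun h => ⟨chosen_mem h, fun _ _ => trivial⟩,
        fun ⟨hx, _⟩ => exists_ext_eq_choice_eq hP hINT (exists_ne_ne_of_not_forall hX) hx⟩⟩
end
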